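/- For every m ∈ (0,1) and κ ∈ (0,1), every maximizer of s_{m,κ} over the interval [0,1] lies in the open interval (0,1); i.e., if h* ∈ [0,1] satisfies s_{m,κ}(h*) ≥ s_{m,κ}(h) for all h ∈ [0,1], then 0 < h* < 1 (the optimal merge point of two support vectors with equal labels is a strict convex combination). -/

import Mathlib

noncomputable def s (m κ h : ℝ) : ℝ := m * κ ^ ((1 - h) ^ 2) + (1 - m) * κ ^ (h ^ 2)

/-
At `h = 0` the first summand of `s` has derivative `-2 m κ log κ > 0`, while the second
has a critical point, so `s` increases to the right of `0`; hence `0` is not a maximizer. The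
symmetry `s m κ (1 - h) = s (1 - m) κ h` transports this to the endpoint `1`.
-/

open Set Real

theorem IsMaxOn.hasDerivAt_nonpos_of_left {f : ℝ → ℝ} {f' a b : ℝ} (hab : a < b)
    (hmax : IsMaxOn f (Icc a b) a) (hf : HasDerivAt f f' a) : f' ≤ 0 := by
  have hcone : b - a ∈ posTangentConeAt (Icc a b) a :=
    sub_mem_posTangentConeAt_of_segment_subset (by rw [segment_eq_Icc hab.le])
  have hslope : f' * (b - a) ≤ 0 := by
    simpa [mul_comm] using
      hmax.localize.hasFDerivWithinAt_nonpos hf.hasDerivWithinAt.hasFDerivWithinAt hcone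
  exact nonpos_of_mul_nonpos_left hslope (sub_pos.2 hab)

theorem s_one_sub (m κ h : ℝ) : s m κ (1 - h) = s (1 - m) κ h := by
  simp only [s]
  ring_nf

theorem hasDerivAt_s (m : ℝ) {κ : ℝ} (hκ : 0 < κ) (h : ℝ) :
    HasDerivAt (s m κ)
      (2 * log κ * (m * (h - 1) * κ ^ ((1 - h) ^ 2) + (1 - m) * h * κ ^ (h ^ 2))) h := by
  have hleft := (((hasDerivAt_id' h).const_sub 1).fun_pow 2).const_rpow hκ |>.const_mul m
  have hright := ((hasDerivAt_id' h).fun_pow 2).const_rpow hκ |>.const_mul (1 - m)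
  refine (hleft.add hright).congr_deriv ?_
  norm_num
  ring

theorem not_isMaxOn_s_zero {m κ : ℝ} (hm : 0 < m) (hκ : κ ∈ Ioo 0 1) :
    ¬ IsMaxOn (s m κ) (Icc 0 1) 0 := by
  intro hmax
  have hderiv := hmax.hasDerivAt_nonpos_of_left one_pos (hasDerivAt_s m hκ.1 0)
  have hlog : log κ < 0 := log_neg hκ.1 hκ.2
  norm_num at hderiv
  nlinarith [mul_pos hm hκ.1]

theorem maximizer_is_interior (m κ : ℝ)
    (hm : m ∈ Set.Ioo (0 : ℝ) 1) (hκ : κ ∈ Set.Ioo (0 : ℝ) 1)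
    (h : ℝ) (hh : h ∈ Set.Icc (0 : ℝ) 1)
    (hmax : ∀ h' ∈ Set.Icc (0 : ℝ) 1, s m κ h' ≤ s m κ h) :
    h ∈ Set.Ioo (0 : ℝ) 1 := by
  have hne_zero : h ≠ 0 := by
    rintro rfl
    exact not_isMaxOn_s_zero hm.1 hκ hmax
  have hne_one : h ≠ 1 := by
    rintro rfl
    refine not_isMaxOn_s_zero (sub_pos.2 hm.2) hκ fun x hx => ?_
    have hx' : 1 - x ∈ Icc (0 : ℝ) 1 := ⟨by linarith [hx.2], by linarith [hx.1]⟩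
    simpa [← s_one_sub] using hmax (1 - x) hx'
  exact ⟨lt_of_le_of_ne hh.1 hne_zero.symm, lt_of_le_of_ne hh.2 hne_one⟩
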